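/- arXiv:math/0606794 — 5 statements merged into one kernel-verified Lean document; each statement's English description precedes it below -/
import Mathlib

section
/- Let G be a locally compact group with a proper left invariant metric d generating its topology. Then the metric space (G,d) has bounded geometry, i.e., (G,d) is coarsely equivalent to a discrete metric space Q such that for every M > 0 there is a uniform bound Γ_M on the cardinality of all closed balls of radius M in Q. -/
/-!
Take a maximal `1`-separated subset `Q` of `G` (Zorn); by maximality every point lies within
distance `1` of `Q`, so a nearest-point retraction `f : G → Q` moves points by at most `1` and is
therefore uniformly expansive. For bounded geometry, translate a ball of radius `M` around
`q ∈ Q` to the ball around `1`, which is compact by properness: finitely many open balls of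
radius `1/2` cover it, and each of them meets the `1`-separated set `q⁻¹ Q` in at most one point.
-/

open Set

theorem exists_maximal_pairwise {α : Type*} (r : α → α → Prop) :
    ∃ s : Set α, Maximal (fun t : Set α => t.Pairwise r) s :=
  zorn_subset _ fun c hc hchain =>
    ⟨⋃₀ c, hchain.pairwise_sUnion.2 hc, fun _ => subset_sUnion_of_mem⟩

section SeparatedSet

variable {X : Type*} {d : X → X → ℝ}

theorem Maximal.exists_lt_of_notMem_of_pairwise_le {ε : ℝ} {Q : Set X}
    (hQ : Maximal (fun s : Set X => s.Pairwise fun p q => ε ≤ d p q) Q)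
    (hsymm : ∀ x y, d x y = d y x) {x : X} (hx : x ∉ Q) : ∃ q ∈ Q, d x q < ε := by
  by_contra! hfar
  have hins : (insert x Q).Pairwise fun p q => ε ≤ d p q :=
    hQ.1.insert_of_notMem hx fun q hq => ⟨hfar q hq, hsymm q x ▸ hfar q hq⟩
  exact hx (hQ.2 hins (subset_insert x Q) (mem_insert x Q))

theorem exists_retraction_of_forall_notMem {s : Set X} {r : ℝ} (hrefl : ∀ x, d x x = 0)
    (hr : 0 ≤ r) (hnear : ∀ x ∉ s, ∃ q ∈ s, d x q ≤ r) :
    ∃ f : X → X, (∀ x, f x ∈ s) ∧ (∀ q ∈ s, f q = q) ∧ ∀ x, d x (f x) ≤ r := by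
  classical
  choose! g hgs hgr using hnear
  refine ⟨s.piecewise id g, fun x => ?_, fun q hq => piecewise_eq_of_mem _ _ _ hq, fun x => ?_⟩
  all_goals by_cases hx : x ∈ s <;> simp [hx, hgs, hgr, hrefl, hr]

theorem apply_apply_le_add_of_forall_le {f : X → X} {C : ℝ} (hsymm : ∀ x y, d x y = d y x)
    (htri : ∀ x y z, d x z ≤ d x y + d y z) (hf : ∀ x, d x (f x) ≤ C) (x y : X) :
    d (f x) (f y) ≤ d x y + 2 * C := by
  linarith [htri (f x) x (f y), htri x y (f y), hsymm (f x) x, hf x, hf y]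

theorem isOpen_setOf_lt [TopologicalSpace X] (htri : ∀ x y z, d x z ≤ d x y + d y z)
    (hgen : ∀ s : Set X, (∀ x ∈ s, ∃ ε > 0, {y | d y x < ε} ⊆ s) → IsOpen s)
    (x : X) (r : ℝ) : IsOpen {y | d y x < r} :=
  hgen _ fun y hy => ⟨r - d y x, sub_pos.2 hy, fun z hz => by
    simp only [mem_ofPred_eq] at hy hz ⊢
    linarith [htri z y x]⟩

theorem IsCompact.exists_ncard_inter_le_of_pairwise_le [TopologicalSpace X] {K : Set X}
    (hK : IsCompact K) {ε : ℝ} (hε : 0 < ε) (hrefl : ∀ x, d x x = 0)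
    (hsymm : ∀ x y, d x y = d y x) (htri : ∀ x y z, d x z ≤ d x y + d y z)
    (hopen : ∀ x, IsOpen {y | d y x < ε / 2}) :
    ∃ N : ℕ, ∀ s : Set X, (s.Pairwise fun p q => ε ≤ d p q) → (s ∩ K).ncard ≤ N := by
  obtain ⟨t, -, hKt⟩ := hK.elim_nhds_subcover (fun x => {y | d y x < ε / 2})
    fun x _ => (hopen x).mem_nhds (by simp [hrefl, hε])
  have hcenter : ∀ p ∈ K, ∃ c ∈ t, d p c < ε / 2 := fun p hp => by
    simpa using hKt hp
  choose! c hct hc using hcenter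
  refine ⟨t.card, fun s hs => ?_⟩
  rw [← ncard_coe_finset]
  refine ncard_le_ncard_of_injOn c (fun p hp => hct p hp.2) fun p hp p' hp' hpp' => ?_
  by_contra hne
  have hpc := hc p hp.2
  have hp'c := hc p' hp'.2
  rw [← hpp'] at hp'c
  linarith [hs hp.1 hp'.1 hne, htri p (c p) p', hsymm (c p) p']

end SeparatedSet

theorem ncard_setOf_le_eq_ncard_image_inter {G : Type*} [Group G] {d : G → G → ℝ}
    (hinv : ∀ g x y : G, d (g * x) (g * y) = d x y) (Q : Set G) (q : G) (M : ℝ) :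
    {p ∈ Q | d p q ≤ M}.ncard = ((q⁻¹ * ·) '' Q ∩ {x | d x 1 ≤ M}).ncard := by
  have hball : {p ∈ Q | d p q ≤ M} = Q ∩ (q⁻¹ * ·) ⁻¹' {x | d x 1 ≤ M} := by
    ext p
    simp [← hinv q (q⁻¹ * p) 1]
  rw [← image_inter_preimage, ← hball, ncard_image_of_injective _ (mul_right_injective q⁻¹)]

theorem Set.Pairwise.image_mul_left {G : Type*} [Group G] {d : G → G → ℝ} {ε : ℝ}
    (hinv : ∀ g x y : G, d (g * x) (g * y) = d x y) {Q : Set G}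
    (hQ : Q.Pairwise fun p q => ε ≤ d p q) (g : G) :
    ((g * ·) '' Q).Pairwise fun p q => ε ≤ d p q :=
  Pairwise.image fun p hp q hq hpq => by simpa [Function.onFun, hinv] using hQ hp hq hpq

theorem stmt5_general {G : Type*} [Group G] [TopologicalSpace G]
    (d : G → G → ℝ)
    (h0 : ∀ x y : G, d x y = 0 ↔ x = y)
    (hsymm : ∀ x y : G, d x y = d y x)
    (htri : ∀ x y z : G, d x z ≤ d x y + d y z)
    (hinv : ∀ g x y : G, d (g * x) (g * y) = d x y)
    (hproper : ∀ r : ℝ, IsCompact {x : G | d x 1 ≤ r})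
    (hgen : ∀ s : Set G, IsOpen s ↔ ∀ x ∈ s, ∃ ε > 0, {y : G | d y x < ε} ⊆ s) :
    ∃ (Q : Set G) (f : G → G),
      -- f maps into Q and is surjective onto Q
      (∀ x : G, f x ∈ Q) ∧ (∀ q ∈ Q, f q = q) ∧
      -- Q is uniformly discrete (hence a discrete space)
      (∀ p ∈ Q, ∀ q ∈ Q, p ≠ q → 1 ≤ d p q) ∧
      -- f is at uniformly bounded distance from the identity
      (∃ C > (0 : ℝ), ∀ x : G, d x (f x) ≤ C) ∧
      -- f is uniformly expansive (together with the above this makes f a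
      -- coarse equivalence of (G,d) with (Q,d), with inverse the inclusion)
      (∀ R > (0 : ℝ), ∃ S > (0 : ℝ), ∀ x y : G, d x y ≤ R → d (f x) (f y) ≤ S) ∧
      -- bounded geometry: balls in Q of radius M have at most Γ_M elements
      (∀ M > (0 : ℝ), ∃ Γ : ℕ, ∀ q ∈ Q, ({p ∈ Q | d p q ≤ M}).ncard ≤ Γ) := by
  have hrefl : ∀ x, d x x = 0 := fun x => (h0 x x).2 rfl
  obtain ⟨Q, hQ⟩ := exists_maximal_pairwise fun p q : G => 1 ≤ d p q
  obtain ⟨f, hfQ, hf_id, hf_near⟩ := exists_retraction_of_forall_notMem hrefl zero_le_one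
    fun x hx => (hQ.exists_lt_of_notMem_of_pairwise_le hsymm hx).imp fun _ hq => ⟨hq.1, hq.2.le⟩
  refine ⟨Q, f, hfQ, hf_id, hQ.1, ⟨1, one_pos, hf_near⟩,
    fun R _ => ⟨R + 2, by linarith, fun x y hxy => ?_⟩, fun M _ => ?_⟩
  · linarith [apply_apply_le_add_of_forall_le hsymm htri hf_near x y]
  · obtain ⟨N, hN⟩ := (hproper M).exists_ncard_inter_le_of_pairwise_le one_pos hrefl hsymm htri
      fun x => isOpen_setOf_lt htri (fun s => (hgen s).2) x _
    exact ⟨N, fun q _ => (ncard_setOf_le_eq_ncard_image_inter hinv Q q M).trans_le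
      (hN _ (hQ.1.image_mul_left hinv q⁻¹))⟩

/-- A locally compact group with a plig metric has bounded geometry: `(G,d)` is
coarsely equivalent to a discrete subspace `Q` whose closed balls of each fixed
radius have uniformly bounded cardinality. The coarse equivalence is witnessed by
a map `f : G → Q` at uniformly bounded distance from the identity (its coarse
inverse being the inclusion `Q ⊆ G`). -/
theorem stmt5 {G : Type*} [Group G] [TopologicalSpace G] [IsTopologicalGroup G]
    [LocallyCompactSpace G]
    (d : G → G → ℝ)
    (h0 : ∀ x y : G, d x y = 0 ↔ x = y)
    (hsymm : ∀ x y : G, d x y = d y x)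
    (htri : ∀ x y z : G, d x z ≤ d x y + d y z)
    (hinv : ∀ g x y : G, d (g * x) (g * y) = d x y)
    (hproper : ∀ r : ℝ, IsCompact {x : G | d x 1 ≤ r})
    (hgen : ∀ s : Set G, IsOpen s ↔ ∀ x ∈ s, ∃ ε > 0, {y : G | d y x < ε} ⊆ s) :
    ∃ (Q : Set G) (f : G → G),
      -- f maps into Q and is surjective onto Q
      (∀ x : G, f x ∈ Q) ∧ (∀ q ∈ Q, f q = q) ∧
      -- Q is uniformly discrete (hence a discrete space)
      (∀ p ∈ Q, ∀ q ∈ Q, p ≠ q → 1 ≤ d p q) ∧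
      -- f is at uniformly bounded distance from the identity
      (∃ C > (0 : ℝ), ∀ x : G, d x (f x) ≤ C) ∧
      -- f is uniformly expansive (together with the above this makes f a
      -- coarse equivalence of (G,d) with (Q,d), with inverse the inclusion)
      (∀ R > (0 : ℝ), ∃ S > (0 : ℝ), ∀ x y : G, d x y ≤ R → d (f x) (f y) ≤ S) ∧
      -- bounded geometry: balls in Q of radius M have at most Γ_M elements
      (∀ M > (0 : ℝ), ∃ Γ : ℕ, ∀ q ∈ Q, ({p ∈ Q | d p q ≤ M}).ncard ≤ Γ) :=
  stmt5_general d h0 hsymm htri hinv hproper hgen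
end

section
/- Let G be a locally compact, second countable group whose topology is generated by a left invariant metric δ such that U = B_δ(e,1) is relatively compact and G = ⋃_{k≥1} U^k. Then G admits a left invariant metric d generating the topology of G with B_d(e,1) = U and B_d(e,n) ⊆ U^{2n−1} for all n ∈ ℕ; moreover d is proper. -/
open Pointwise

/-!
Write `N g = δ g 1` and `U = {N < 1}`. Let `D g = chainNorm N g` be the infimum, over all
factorizations `g = u₁ ⋯ uₘ` with `uᵢ ∈ U`, of `N u₁ + ⋯ + N uₘ`, and `d x y = D (x⁻¹ * y)`.
Subadditivity of `N` gives `N ≤ D`, with equality on `U`, so `d` and `δ` have the same balls of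
radius at most `1`. In a factorization of cost `< n`, two adjacent factors of total cost `< 1`
merge into a single factor in `U`; once no merge is possible, any two consecutive factors cost at
least `1`, so at most `2n - 1` factors remain. Hence closed `d`-balls are closed subsets of the
compact sets `(closure U) ^ (2n - 1)`.
-/

theorem IsCompact.pow {M : Type*} [Monoid M] [TopologicalSpace M] [ContinuousMul M] {K : Set M}
    (hK : IsCompact K) : ∀ n : ℕ, IsCompact (K ^ n)
  | 0 => by simp
  | n + 1 => by rw [pow_succ]; exact (hK.pow n).mul hK

section Balls

variable {X : Type*}

theorem exists_ball_subset_iff_of_ball_eq {d δ : X → X → ℝ}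
    (h : ∀ x (ε : ℝ), ε ≤ 1 → {y | d y x < ε} = {y | δ y x < ε}) (s : Set X) (x : X) :
    (∃ ε > 0, {y | d y x < ε} ⊆ s) ↔ ∃ ε > 0, {y | δ y x < ε} ⊆ s := by
  have key : ∀ {d δ : X → X → ℝ}, (∀ ε : ℝ, ε ≤ 1 → {y | d y x < ε} = {y | δ y x < ε}) →
      (∃ ε > 0, {y | d y x < ε} ⊆ s) → ∃ ε > 0, {y | δ y x < ε} ⊆ s := by
    rintro d δ h ⟨ε, hε, hs⟩
    refine ⟨min ε 1, lt_min hε one_pos, ?_⟩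
    rw [← h _ (min_le_right _ _)]
    exact fun y (hy : d y x < min ε 1) => hs (show d y x < ε from hy.trans_le (min_le_left _ _))
  exact ⟨key (h x), key fun ε hε => (h x ε hε).symm⟩

theorem isClosed_setOf_le_of_isOpen_iff [TopologicalSpace X] {d : X → X → ℝ}
    (hsymm : ∀ x y, d x y = d y x) (htri : ∀ x y z, d x z ≤ d x y + d y z)
    (hgen : ∀ s : Set X, IsOpen s ↔ ∀ x ∈ s, ∃ ε > 0, {y | d y x < ε} ⊆ s) (z : X) (r : ℝ) :
    IsClosed {x | d x z ≤ r} := by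
  rw [← isOpen_compl_iff, hgen]
  intro x hx
  refine ⟨d x z - r, by simp_all, fun y hy => ?_⟩
  simp only [Set.mem_compl_iff, Set.mem_ofPred_eq, not_le] at hx hy ⊢
  linarith [htri x y z, hsymm x y]

end Balls

section ChainNorm

variable {G : Type*} [Group G]

def GroupNorm.ofLeftInvariantDist (δ : G → G → ℝ) (h0 : ∀ x y, δ x y = 0 ↔ x = y)
    (hsymm : ∀ x y, δ x y = δ y x) (htri : ∀ x y z, δ x z ≤ δ x y + δ y z)
    (hinv : ∀ g x y, δ (g * x) (g * y) = δ x y) : GroupNorm G where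
  toFun g := δ g 1
  map_one' := (h0 1 1).2 rfl
  mul_le' g h := by
    have hleft := hinv g h 1
    rw [mul_one] at hleft
    linarith [htri (g * h) g 1]
  inv' g := by
    have hleft := hinv g⁻¹ 1 g
    rw [mul_one, inv_mul_cancel] at hleft
    rw [hleft, hsymm]
  eq_one_of_map_eq_zero' g := (h0 g 1).1

variable {F : Type*} [FunLike F G ℝ] (N : F)

def chainCosts (g : G) : Set ℝ :=
  {s | ∃ L : List G, (∀ u ∈ L, N u < 1) ∧ L.prod = g ∧ (L.map N).sum = s}

noncomputable def chainNorm (g : G) : ℝ := sInf (chainCosts N g)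

theorem chainCosts_nonempty {g : G} {k : ℕ} (hg : g ∈ {u | N u < 1} ^ k) :
    (chainCosts N g).Nonempty := by
  obtain ⟨f, rfl⟩ := Set.mem_pow.1 hg
  refine ⟨_, _, ?_, rfl, rfl⟩
  intro u hu
  obtain ⟨i, rfl⟩ := List.mem_ofFn.1 hu
  exact (f i).2

theorem exists_chain_of_chainNorm_lt {g : G} (hg : (chainCosts N g).Nonempty) {r : ℝ}
    (h : chainNorm N g < r) :
    ∃ L : List G, (∀ u ∈ L, N u < 1) ∧ L.prod = g ∧ (L.map N).sum < r := by
  obtain ⟨_, ⟨L, hL, hprod, rfl⟩, hlt⟩ := exists_lt_of_csInf_lt hg h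
  exact ⟨L, hL, hprod, hlt⟩

variable [GroupSeminormClass F G ℝ]

theorem chainNorm_nonneg (g : G) : 0 ≤ chainNorm N g :=
  Real.sInf_nonneg (by rintro _ ⟨L, -, -, rfl⟩; exact List.sum_nonneg (by simp))

theorem chainNorm_le_sum {L : List G} (hL : ∀ u ∈ L, N u < 1) :
    chainNorm N L.prod ≤ (L.map N).sum :=
  csInf_le ⟨0, by rintro _ ⟨L, -, -, rfl⟩; exact List.sum_nonneg (by simp)⟩ ⟨L, hL, rfl, rfl⟩

theorem chainNorm_one : chainNorm N (1 : G) = 0 :=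
  le_antisymm (by simpa using chainNorm_le_sum N (L := []) (by simp)) (chainNorm_nonneg N 1)

theorem chainNorm_le {g : G} (hg : N g < 1) : chainNorm N g ≤ N g := by
  simpa using chainNorm_le_sum N (L := [g]) (by simpa)

theorem chainCosts_inv (g : G) : chainCosts N g⁻¹ = chainCosts N g := by
  have key : ∀ g : G, chainCosts N g ⊆ chainCosts N g⁻¹ := by
    rintro g _ ⟨L, hL, rfl, rfl⟩
    refine ⟨(L.map (·⁻¹)).reverse, ?_, (List.prod_inv_reverse L).symm, ?_⟩
    · simp only [List.mem_reverse, List.mem_map]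
      rintro _ ⟨u, hu, rfl⟩
      simpa using hL u hu
    simp [List.map_reverse, Function.comp_def]
  exact Set.Subset.antisymm (by simpa using key g⁻¹) (key g)

theorem chainNorm_inv (g : G) : chainNorm N g⁻¹ = chainNorm N g :=
  congrArg sInf (chainCosts_inv N g)

theorem prod_mem_pow_of_sum_lt : ∀ (L : List G), (∀ u ∈ L, N u < 1) → ∀ n : ℕ,
    (L.map N).sum < n + 1 → L.prod ∈ {u | N u < 1} ^ (2 * n + 1)
  | [], _, _, _ => Set.one_mem_pow (by simp)
  | [u], hL, _, _ => Set.subset_pow (by simp) (by omega) (by simpa using hL)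
  | u :: v :: R, hL, n, hsum => by
    have huv := map_mul_le_add N u v
    simp only [List.map_cons, List.sum_cons, List.prod_cons] at hsum ⊢
    by_cases hmerge : N u + N v < 1
    · simpa [mul_assoc] using prod_mem_pow_of_sum_lt ((u * v) :: R)
        (by simp_all [huv.trans_lt hmerge]) n
        (by simp only [List.map_cons, List.sum_cons]; linarith)
    · obtain ⟨m, rfl⟩ : ∃ m, n = m + 1 := Nat.exists_eq_succ_of_ne_zero <| by
        rintro rfl
        rw [Nat.cast_zero, zero_add] at hsum
        linarith [List.sum_nonneg (l := R.map N) (by simp)]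
      have hR := prod_mem_pow_of_sum_lt R (by simp_all) m (by push_cast at hsum; linarith)
      rw [show 2 * (m + 1) + 1 = 2 * m + 1 + 1 + 1 by ring, pow_succ', pow_succ']
      exact Set.mul_mem_mul (hL u (by simp)) (Set.mul_mem_mul (hL v (by simp)) hR)
termination_by L => L.length

theorem le_chainNorm {g : G} (hg : (chainCosts N g).Nonempty) : N g ≤ chainNorm N g :=
  le_csInf hg <| by
    rintro _ ⟨L, -, rfl, rfl⟩
    exact L.apply_prod_le_sum_map N (map_one_eq_zero N).le (map_mul_le_add N)

theorem chainNorm_lt_iff {g : G} (hg : (chainCosts N g).Nonempty) {ε : ℝ} (hε : ε ≤ 1) :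
    chainNorm N g < ε ↔ N g < ε :=
  ⟨(le_chainNorm N hg).trans_lt, fun h => (chainNorm_le N (h.trans_le hε)).trans_lt h⟩

theorem mem_pow_of_chainNorm_lt {g : G} (hg : (chainCosts N g).Nonempty) {n : ℕ}
    (h : chainNorm N g < n + 1) : g ∈ {u | N u < 1} ^ (2 * n + 1) := by
  obtain ⟨L, hL, rfl, hsum⟩ := exists_chain_of_chainNorm_lt N hg h
  exact prod_mem_pow_of_sum_lt N L hL n hsum

theorem chainNorm_mul_le {g h : G} (hg : (chainCosts N g).Nonempty)
    (hh : (chainCosts N h).Nonempty) : chainNorm N (g * h) ≤ chainNorm N g + chainNorm N h := by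
  have hconcat : ∀ a ∈ chainCosts N g, ∀ b ∈ chainCosts N h, chainNorm N (g * h) ≤ a + b := by
    rintro _ ⟨L₁, hL₁, rfl, rfl⟩ _ ⟨L₂, hL₂, rfl, rfl⟩
    simpa using chainNorm_le_sum N (L := L₁ ++ L₂)
      fun u hu => (List.mem_append.1 hu).elim (hL₁ u) (hL₂ u)
  have hleft : ∀ b ∈ chainCosts N h, chainNorm N (g * h) - b ≤ chainNorm N g := fun b hb =>
    le_csInf hg fun a ha => by linarith [hconcat a ha b hb]
  have hright : chainNorm N (g * h) - chainNorm N g ≤ chainNorm N h :=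
    le_csInf hh fun b hb => by linarith [hleft b hb]
  linarith

end ChainNorm

theorem stmt7_general {G : Type*} [Group G] [TopologicalSpace G] [IsTopologicalGroup G]
    (δ : G → G → ℝ)
    (h0 : ∀ x y : G, δ x y = 0 ↔ x = y)
    (hsymm : ∀ x y : G, δ x y = δ y x)
    (htri : ∀ x y z : G, δ x z ≤ δ x y + δ y z)
    (hinv : ∀ g x y : G, δ (g * x) (g * y) = δ x y)
    (hgen : ∀ s : Set G, IsOpen s ↔ ∀ x ∈ s, ∃ ε > 0, {y : G | δ y x < ε} ⊆ s)
    (U : Set G) (hU : U = {x : G | δ x 1 < 1})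
    (hUcpt : IsCompact (closure U))
    (hUgen : ∀ g : G, ∃ k : ℕ, 1 ≤ k ∧ g ∈ U ^ k) :
    ∃ d : G → G → ℝ,
      (∀ x y : G, d x y = 0 ↔ x = y) ∧
      (∀ x y : G, d x y = d y x) ∧
      (∀ x y z : G, d x z ≤ d x y + d y z) ∧
      (∀ g x y : G, d (g * x) (g * y) = d x y) ∧
      (∀ s : Set G, IsOpen s ↔ ∀ x ∈ s, ∃ ε > 0, {y : G | d y x < ε} ⊆ s) ∧
      ({x : G | d x 1 < 1} = U) ∧
      (∀ n : ℕ, 1 ≤ n → {x : G | d x 1 < (n : ℝ)} ⊆ U ^ (2 * n - 1)) ∧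
      (∀ r : ℝ, IsCompact {x : G | d x 1 ≤ r}) := by
  set N := GroupNorm.ofLeftInvariantDist δ h0 hsymm htri hinv
  subst hU
  have hne (g : G) : (chainCosts N g).Nonempty :=
    let ⟨_, _, hk⟩ := hUgen g; chainCosts_nonempty N hk
  have hsymm' (x y : G) : chainNorm N (x⁻¹ * y) = chainNorm N (y⁻¹ * x) := by
    rw [← chainNorm_inv, mul_inv_rev, inv_inv]
  have htri' (x y z : G) :
      chainNorm N (x⁻¹ * z) ≤ chainNorm N (x⁻¹ * y) + chainNorm N (y⁻¹ * z) := by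
    simpa [mul_assoc] using chainNorm_mul_le N (hne (x⁻¹ * y)) (hne (y⁻¹ * z))
  have hballs (x : G) (ε : ℝ) (hε : ε ≤ 1) :
      {y | chainNorm N (y⁻¹ * x) < ε} = {y | δ y x < ε} := by
    ext y
    rw [Set.mem_ofPred_eq, Set.mem_ofPred_eq, hsymm', chainNorm_lt_iff N (hne _) hε,
      ← hinv x⁻¹ y x, inv_mul_cancel]
    rfl
  have hgen' (s : Set G) :
      IsOpen s ↔ ∀ x ∈ s, ∃ ε > 0, {y | chainNorm N (y⁻¹ * x) < ε} ⊆ s := by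
    simp only [hgen, exists_ball_subset_iff_of_ball_eq hballs]
  have hball_pow (x : G) (n : ℕ) (hx : chainNorm N (x⁻¹ * 1) < n + 1) :
      x ∈ {x | δ x 1 < 1} ^ (2 * n + 1) :=
    mem_pow_of_chainNorm_lt N (hne x) (by simpa [chainNorm_inv] using hx)
  refine ⟨fun x y => chainNorm N (x⁻¹ * y), fun x y => ?_, hsymm', htri',
    fun g x y => by simp [mul_assoc], hgen', hballs 1 1 le_rfl, fun n hn x hx => ?_, fun r => ?_⟩
  · refine ⟨fun h => inv_mul_eq_one.1 ((map_eq_zero_iff_eq_one N).1 ?_),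
      fun h => by simp [h, chainNorm_one]⟩
    exact le_antisymm (h ▸ le_chainNorm N (hne _)) (apply_nonneg N _)
  · obtain ⟨m, rfl⟩ := Nat.exists_eq_add_of_le' hn
    simpa [Nat.mul_succ] using hball_pow x m (by simpa using hx)
  · refine (hUcpt.pow _).of_isClosed_subset
      (isClosed_setOf_le_of_isOpen_iff hsymm' htri' hgen' 1 r) fun x hx =>
      Set.pow_subset_pow_left subset_closure
        (hball_pow x ⌊r⌋₊ (hx.trans_lt (Nat.lt_floor_add_one r)))

/-- If the topology of a locally compact second countable group `G` is generated
by a left invariant metric `δ` with `U = B_δ(e,1)` relatively compact and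
`G = ⋃_{k ≥ 1} U^k`, then `G` admits a left invariant metric `d` generating the
topology with `B_d(e,1) = U` and `B_d(e,n) ⊆ U^{2n−1}` for all `n`; moreover `d`
is proper. -/
theorem stmt7 {G : Type*} [Group G] [TopologicalSpace G] [IsTopologicalGroup G]
    [LocallyCompactSpace G] [SecondCountableTopology G]
    (δ : G → G → ℝ)
    (h0 : ∀ x y : G, δ x y = 0 ↔ x = y)
    (hsymm : ∀ x y : G, δ x y = δ y x)
    (htri : ∀ x y z : G, δ x z ≤ δ x y + δ y z)
    (hinv : ∀ g x y : G, δ (g * x) (g * y) = δ x y)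
    (hgen : ∀ s : Set G, IsOpen s ↔ ∀ x ∈ s, ∃ ε > 0, {y : G | δ y x < ε} ⊆ s)
    (U : Set G) (hU : U = {x : G | δ x 1 < 1})
    (hUcpt : IsCompact (closure U))
    (hUgen : ∀ g : G, ∃ k : ℕ, 1 ≤ k ∧ g ∈ U ^ k) :
    ∃ d : G → G → ℝ,
      (∀ x y : G, d x y = 0 ↔ x = y) ∧
      (∀ x y : G, d x y = d y x) ∧
      (∀ x y z : G, d x z ≤ d x y + d y z) ∧
      (∀ g x y : G, d (g * x) (g * y) = d x y) ∧
      (∀ s : Set G, IsOpen s ↔ ∀ x ∈ s, ∃ ε > 0, {y : G | d y x < ε} ⊆ s) ∧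
      ({x : G | d x 1 < 1} = U) ∧
      (∀ n : ℕ, 1 ≤ n → {x : G | d x 1 < (n : ℝ)} ⊆ U ^ (2 * n - 1)) ∧
      (∀ r : ℝ, IsCompact {x : G | d x 1 ≤ r}) :=
  stmt7_general δ h0 hsymm htri hinv hgen U hU hUcpt hUgen
end

section
/- On GL(n,ℝ), the metric d(A,B) = l(B⁻¹A), where l(A) = max{ln(1+‖A−I‖), ln(1+‖A⁻¹−I‖)}, is a proper left invariant metric generating the topology of GL(n,ℝ); in particular, for every r > 0 the set {A ∈ GL(n,ℝ) : l(A) ≤ r} is compact. -/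
/-- The `ℓ²`-operator norm of a square real matrix, i.e. the operator norm of the
induced linear map on Euclidean space. -/
noncomputable def matOpNorm {n : ℕ} (A : Matrix (Fin n) (Fin n) ℝ) : ℝ :=
  ‖Matrix.toEuclideanCLM (𝕜 := ℝ) A‖

namespace Stmt11Aux

variable {n : ℕ}

local notation "Mat" => Matrix (Fin n) (Fin n) ℝ
local notation "CLM" => (EuclideanSpace ℝ (Fin n) →L[ℝ] EuclideanSpace ℝ (Fin n))

noncomputable def T : Mat ≃⋆ₐ[ℝ] CLM := Matrix.toEuclideanCLM (𝕜 := ℝ)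

lemma matOpNorm_def (x : Mat) : matOpNorm x = ‖(T x : CLM)‖ := rfl

lemma matOpNorm_nonneg (x : Mat) : 0 ≤ matOpNorm x := norm_nonneg _

lemma matOpNorm_mul_le (x y : Mat) : matOpNorm (x * y) ≤ matOpNorm x * matOpNorm y := by
  rw [matOpNorm_def, matOpNorm_def, matOpNorm_def, map_mul]
  exact norm_mul_le _ _

lemma matOpNorm_one_le : matOpNorm (1 : Mat) ≤ 1 := by
  rw [matOpNorm_def, map_one]
  exact ContinuousLinearMap.norm_id_le

lemma matOpNorm_eq_zero {x : Mat} (h : matOpNorm x = 0) : x = 0 := by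
  rw [matOpNorm_def, norm_eq_zero] at h
  have := congrArg (Matrix.toEuclideanCLM (𝕜 := ℝ)).symm h
  simpa [T] using this

lemma matOpNorm_add_le (x y : Mat) : matOpNorm (x + y) ≤ matOpNorm x + matOpNorm y := by
  rw [matOpNorm_def, matOpNorm_def, matOpNorm_def, map_add]
  exact norm_add_le _ _

/-- The key submultiplicativity estimate. -/
lemma one_add_le_mul (x y : Mat) :
    1 + matOpNorm (y * x - 1) ≤ (1 + matOpNorm (x - 1)) * (1 + matOpNorm (y - 1)) := by
  have h1 : y * x - 1 = y * (x - 1) + (y - 1) := by noncomm_ring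
  have h2 : matOpNorm (y * x - 1) ≤ matOpNorm y * matOpNorm (x - 1) + matOpNorm (y - 1) := by
    rw [h1]
    exact le_trans (matOpNorm_add_le _ _) (by gcongr; exact matOpNorm_mul_le _ _)
  have h3 : matOpNorm y ≤ 1 + matOpNorm (y - 1) := by
    have : y = 1 + (y - 1) := by abel
    calc matOpNorm y = matOpNorm (1 + (y - 1)) := by rw [← this]
    _ ≤ matOpNorm (1 : Mat) + matOpNorm (y - 1) := matOpNorm_add_le _ _
    _ ≤ 1 + matOpNorm (y - 1) := by gcongr; exact matOpNorm_one_le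
  nlinarith [matOpNorm_nonneg (x - 1), matOpNorm_nonneg (y - 1), matOpNorm_nonneg (y * x - 1)]

lemma log_mul_bound (x y : Mat) :
    Real.log (1 + matOpNorm (y * x - 1)) ≤
      Real.log (1 + matOpNorm (x - 1)) + Real.log (1 + matOpNorm (y - 1)) := by
  have hx : (0:ℝ) < 1 + matOpNorm (x - 1) := by linarith [matOpNorm_nonneg (x - 1)]
  have hy : (0:ℝ) < 1 + matOpNorm (y - 1) := by linarith [matOpNorm_nonneg (y - 1)]
  have h0 : (0:ℝ) < 1 + matOpNorm (y * x - 1) := by linarith [matOpNorm_nonneg (y * x - 1)]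
  calc Real.log (1 + matOpNorm (y * x - 1))
      ≤ Real.log ((1 + matOpNorm (x - 1)) * (1 + matOpNorm (y - 1))) :=
        Real.log_le_log h0 (one_add_le_mul x y)
    _ = _ := Real.log_mul hx.ne' hy.ne'


noncomputable def Lm : Mat ≃ₗ[ℝ] CLM :=
  { toFun := Matrix.toEuclideanCLM (𝕜 := ℝ),
    invFun := (Matrix.toEuclideanCLM (𝕜 := ℝ)).symm,
    map_add' := _root_.map_add _,
    map_smul' := _root_.map_smul _,
    left_inv := fun x => by simp,
    right_inv := fun x => by simp }

noncomputable def cle : Mat ≃L[ℝ] CLM := (Lm (n := n)).toContinuousLinearEquiv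

lemma cle_apply (x : Mat) : (cle x : CLM) = T x := rfl

lemma T_continuous : Continuous fun x : Mat => (T x : CLM) := (cle (n := n)).continuous

lemma matOpNorm_continuous : Continuous fun x : Mat => matOpNorm x :=
  continuous_norm.comp T_continuous

/-- The embedding of `GL n ℝ` into `CLM × CLM`. -/
noncomputable def e' (B : GL (Fin n) ℝ) : CLM × CLM :=
  (T (B : Mat), T ((B⁻¹ : GL (Fin n) ℝ) : Mat))

lemma inducing_e' : Topology.IsInducing (e' (n := n)) := by
  have h1 : Topology.IsInducing
      ((((cle (n := n)).toHomeomorph.prodCongr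
        ((MulOpposite.opHomeomorph.symm).trans (cle (n := n)).toHomeomorph))) ∘
        (Units.embedProduct Mat)) :=
    (Homeomorph.isInducing _).comp Units.isEmbedding_embedProduct.toIsInducing
  exact h1

end Stmt11Aux

open Stmt11Aux in
/-- On `GL(n,ℝ)`, the metric `d(A,B) = l(B⁻¹A)`, where
`l(A) = max{ln(1+‖A−I‖), ln(1+‖A⁻¹−I‖)}`, is a proper left invariant metric
generating the topology of `GL(n,ℝ)`; in particular `{A : l(A) ≤ r}` is compact
for every `r > 0`. -/
theorem stmt11 {n : ℕ}
    (l : GL (Fin n) ℝ → ℝ)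
    (hl : ∀ A : GL (Fin n) ℝ,
      l A = max (Real.log (1 + matOpNorm ((A : Matrix (Fin n) (Fin n) ℝ) - 1)))
                (Real.log (1 + matOpNorm (((A⁻¹ : GL (Fin n) ℝ) : Matrix (Fin n) (Fin n) ℝ) - 1))))
    (d : GL (Fin n) ℝ → GL (Fin n) ℝ → ℝ)
    (hd : ∀ A B : GL (Fin n) ℝ, d A B = l (B⁻¹ * A)) :
    -- d is a metric
    (∀ A B : GL (Fin n) ℝ, d A B = 0 ↔ A = B) ∧
    (∀ A B : GL (Fin n) ℝ, d A B = d B A) ∧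
    (∀ A B C : GL (Fin n) ℝ, d A C ≤ d A B + d B C) ∧
    -- left invariant
    (∀ C A B : GL (Fin n) ℝ, d (C * A) (C * B) = d A B) ∧
    -- generates the topology of GL(n,ℝ)
    (∀ s : Set (GL (Fin n) ℝ), IsOpen s ↔ ∀ A ∈ s, ∃ ε > 0, {B | d B A < ε} ⊆ s) ∧
    -- proper
    (∀ r > (0 : ℝ), IsCompact {A : GL (Fin n) ℝ | l A ≤ r}) := by
  -- basic properties of l
  have hlone : l 1 = 0 := by
    rw [hl, inv_one, Units.val_one, sub_self]
    have h0 : matOpNorm (0 : Matrix (Fin n) (Fin n) ℝ) = 0 := by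
      rw [matOpNorm_def, map_zero, norm_zero]
    rw [h0]
    simp
  have hlinv : ∀ A : GL (Fin n) ℝ, l A⁻¹ = l A := by
    intro A
    rw [hl A⁻¹, hl A, inv_inv]
    exact max_comm _ _
  have hlmul : ∀ X Y : GL (Fin n) ℝ, l (Y * X) ≤ l X + l Y := by
    intro X Y
    rw [hl (Y * X)]
    apply max_le
    · have h := log_mul_bound ((X : Matrix (Fin n) (Fin n) ℝ)) ((Y : Matrix (Fin n) (Fin n) ℝ))
      rw [← Units.val_mul] at h
      refine h.trans (add_le_add ?_ ?_)
      · rw [hl X]; exact le_max_left _ _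
      · rw [hl Y]; exact le_max_left _ _
    · have h := log_mul_bound ((Y⁻¹ : GL (Fin n) ℝ) : Matrix (Fin n) (Fin n) ℝ)
        ((X⁻¹ : GL (Fin n) ℝ) : Matrix (Fin n) (Fin n) ℝ)
      rw [← Units.val_mul, ← mul_inv_rev] at h
      refine h.trans ?_
      rw [add_comm (l X) (l Y)]
      exact add_le_add (by rw [hl Y]; exact le_max_right _ _)
        (by rw [hl X]; exact le_max_right _ _)
  -- continuity of l
  have hlc : Continuous l := by
    have hcoe : Continuous fun A : GL (Fin n) ℝ => (A : Matrix (Fin n) (Fin n) ℝ) :=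
      Units.continuous_val
    have hcoeinv : Continuous fun A : GL (Fin n) ℝ =>
        ((A⁻¹ : GL (Fin n) ℝ) : Matrix (Fin n) (Fin n) ℝ) := Units.continuous_coe_inv
    have hcont : Continuous fun A : GL (Fin n) ℝ =>
        max (Real.log (1 + matOpNorm ((A : Matrix (Fin n) (Fin n) ℝ) - 1)))
            (Real.log (1 + matOpNorm (((A⁻¹ : GL (Fin n) ℝ) : Matrix (Fin n) (Fin n) ℝ) - 1))) := by
      apply Continuous.max
      · apply Continuous.log
        · exact continuous_const.add (matOpNorm_continuous.comp (hcoe.sub continuous_const))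
        · intro x
          have := matOpNorm_nonneg ((x : Matrix (Fin n) (Fin n) ℝ) - 1)
          intro hx; linarith [hx]
      · apply Continuous.log
        · exact continuous_const.add (matOpNorm_continuous.comp (hcoeinv.sub continuous_const))
        · intro x
          have := matOpNorm_nonneg (((x⁻¹ : GL (Fin n) ℝ) : Matrix (Fin n) (Fin n) ℝ) - 1)
          intro hx; linarith [hx]
    have hle : l = fun A : GL (Fin n) ℝ => max (Real.log (1 + matOpNorm ((A : Matrix (Fin n) (Fin n) ℝ) - 1)))
        (Real.log (1 + matOpNorm (((A⁻¹ : GL (Fin n) ℝ) : Matrix (Fin n) (Fin n) ℝ) - 1))) :=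
      funext hl
    rw [hle]; exact hcont
  refine ⟨?_, ?_, ?_, ?_, ?_, ?_⟩
  · -- d A B = 0 ↔ A = B
    intro A B
    constructor
    · intro h
      rw [hd] at h
      rw [hl] at h
      have key : ∀ m : ℝ, 0 ≤ m → Real.log (1 + m) ≤ 0 → m = 0 := by
        intro m hm hlog
        have h2 : 0 ≤ Real.log (1 + m) := Real.log_nonneg (by linarith)
        have h3 : Real.log (1 + m) = 0 := le_antisymm hlog h2
        have h4 := Real.exp_log (by linarith : (0:ℝ) < 1 + m)
        rw [h3, Real.exp_zero] at h4
        linarith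
      have ha : Real.log (1 + matOpNorm (((B⁻¹ * A : GL (Fin n) ℝ) :
          Matrix (Fin n) (Fin n) ℝ) - 1)) ≤ 0 := h ▸ le_max_left _ _
      have hz := key _ (matOpNorm_nonneg _) ha
      have hz2 : ((B⁻¹ * A : GL (Fin n) ℝ) : Matrix (Fin n) (Fin n) ℝ) - 1 = 0 :=
        matOpNorm_eq_zero hz
      have hz3 : ((B⁻¹ * A : GL (Fin n) ℝ) : Matrix (Fin n) (Fin n) ℝ)
          = ((1 : GL (Fin n) ℝ) : Matrix (Fin n) (Fin n) ℝ) := by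
        rw [Units.val_one]; exact sub_eq_zero.mp hz2
      have hz4 : (B⁻¹ * A : GL (Fin n) ℝ) = 1 := Units.ext hz3
      exact (inv_mul_eq_one.mp hz4).symm
    · intro h
      rw [hd, h, inv_mul_cancel, hlone]
  · -- symmetry
    intro A B
    rw [hd, hd, ← hlinv (B⁻¹ * A), mul_inv_rev, inv_inv]
  · -- triangle
    intro A B C
    rw [hd, hd, hd]
    have h : C⁻¹ * A = (C⁻¹ * B) * (B⁻¹ * A) := by group
    rw [h]
    exact hlmul _ _
  · -- left invariance
    intro C A B
    rw [hd, hd]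
    congr 1
    group
  · -- topology
    have hdc : ∀ A : GL (Fin n) ℝ, Continuous fun B => d B A := by
      intro A
      have heq : (fun B => d B A) = fun B => l (A⁻¹ * B) := funext fun B => hd B A
      rw [heq]
      exact hlc.comp (continuous_const.mul continuous_id)
    intro s
    constructor
    · intro hs A hA
      have hmem : s ∈ nhds A := hs.mem_nhds hA
      rw [(inducing_e' (n := n)).nhds_eq_comap] at hmem
      obtain ⟨V, hV, hVs⟩ := Filter.mem_comap.mp hmem
      obtain ⟨δ, hδ, hball⟩ := Metric.mem_nhds_iff.mp hV
      set c : ℝ := matOpNorm ((A : Matrix (Fin n) (Fin n) ℝ))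
        + matOpNorm (((A⁻¹ : GL (Fin n) ℝ) : Matrix (Fin n) (Fin n) ℝ)) + 1 with hc
      have hcpos : 0 < c := by
        have h1 := matOpNorm_nonneg ((A : Matrix (Fin n) (Fin n) ℝ))
        have h2 := matOpNorm_nonneg (((A⁻¹ : GL (Fin n) ℝ) : Matrix (Fin n) (Fin n) ℝ))
        rw [hc]; linarith
      have hdc2 : 0 < δ / c := div_pos hδ hcpos
      refine ⟨Real.log (1 + δ / c), Real.log_pos (by linarith), ?_⟩
      intro B hB
      simp only [Set.mem_setOf_eq] at hB
      rw [hd, hl] at hB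
      have hmax := max_lt_iff.mp hB
      have hnn1 := matOpNorm_nonneg (((A⁻¹ * B : GL (Fin n) ℝ) : Matrix (Fin n) (Fin n) ℝ) - 1)
      have hnn2 := matOpNorm_nonneg ((((A⁻¹ * B)⁻¹ : GL (Fin n) ℝ) : Matrix (Fin n) (Fin n) ℝ) - 1)
      have hm1 : matOpNorm (((A⁻¹ * B : GL (Fin n) ℝ) : Matrix (Fin n) (Fin n) ℝ) - 1) < δ / c := by
        have := (Real.log_lt_log_iff (by linarith) (by linarith)).mp hmax.1
        linarith
      have hm2 : matOpNorm ((((A⁻¹ * B)⁻¹ : GL (Fin n) ℝ) : Matrix (Fin n) (Fin n) ℝ) - 1)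
          < δ / c := by
        have := (Real.log_lt_log_iff (by linarith) (by linarith)).mp hmax.2
        linarith
      apply hVs
      apply hball
      rw [Metric.mem_ball, Prod.dist_eq]
      have hbound1 : dist (e' B).1 (e' A).1 < δ := by
        show dist (T ((B : Matrix (Fin n) (Fin n) ℝ))) (T ((A : Matrix (Fin n) (Fin n) ℝ))) < δ
        rw [dist_eq_norm, ← map_sub, ← matOpNorm_def]
        have hfac : (B : Matrix (Fin n) (Fin n) ℝ) - (A : Matrix (Fin n) (Fin n) ℝ)
            = (A : Matrix (Fin n) (Fin n) ℝ)
              * (((A⁻¹ * B : GL (Fin n) ℝ) : Matrix (Fin n) (Fin n) ℝ) - 1) := by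
          rw [Units.val_mul, mul_sub, mul_one, ← mul_assoc, Units.mul_inv, one_mul]
        rw [hfac]
        calc matOpNorm _ ≤ matOpNorm ((A : Matrix (Fin n) (Fin n) ℝ))
              * matOpNorm (((A⁻¹ * B : GL (Fin n) ℝ) : Matrix (Fin n) (Fin n) ℝ) - 1) :=
            matOpNorm_mul_le _ _
          _ ≤ c * matOpNorm (((A⁻¹ * B : GL (Fin n) ℝ) : Matrix (Fin n) (Fin n) ℝ) - 1) := by
            apply mul_le_mul_of_nonneg_right _ hnn1
            have h2 := matOpNorm_nonneg (((A⁻¹ : GL (Fin n) ℝ) : Matrix (Fin n) (Fin n) ℝ))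
            rw [hc]; linarith
          _ < c * (δ / c) := by exact mul_lt_mul_of_pos_left hm1 hcpos
          _ = δ := by field_simp
      have hbound2 : dist (e' B).2 (e' A).2 < δ := by
        show dist (T (((B⁻¹ : GL (Fin n) ℝ) : Matrix (Fin n) (Fin n) ℝ)))
          (T (((A⁻¹ : GL (Fin n) ℝ) : Matrix (Fin n) (Fin n) ℝ))) < δ
        rw [dist_eq_norm, ← map_sub, ← matOpNorm_def]
        have hZ : ((A⁻¹ * B : GL (Fin n) ℝ))⁻¹ = B⁻¹ * A := by rw [mul_inv_rev, inv_inv]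
        have hfac : ((B⁻¹ : GL (Fin n) ℝ) : Matrix (Fin n) (Fin n) ℝ)
            - ((A⁻¹ : GL (Fin n) ℝ) : Matrix (Fin n) (Fin n) ℝ)
            = ((((A⁻¹ * B)⁻¹ : GL (Fin n) ℝ) : Matrix (Fin n) (Fin n) ℝ) - 1)
              * ((A⁻¹ : GL (Fin n) ℝ) : Matrix (Fin n) (Fin n) ℝ) := by
          rw [hZ, Units.val_mul, sub_mul, one_mul, mul_assoc, Units.mul_inv, mul_one]
        rw [hfac]
        calc matOpNorm _
            ≤ matOpNorm ((((A⁻¹ * B)⁻¹ : GL (Fin n) ℝ) : Matrix (Fin n) (Fin n) ℝ) - 1)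
              * matOpNorm (((A⁻¹ : GL (Fin n) ℝ) : Matrix (Fin n) (Fin n) ℝ)) :=
            matOpNorm_mul_le _ _
          _ ≤ matOpNorm ((((A⁻¹ * B)⁻¹ : GL (Fin n) ℝ) : Matrix (Fin n) (Fin n) ℝ) - 1) * c := by
            apply mul_le_mul_of_nonneg_left _ hnn2
            have h1 := matOpNorm_nonneg ((A : Matrix (Fin n) (Fin n) ℝ))
            rw [hc]; linarith
          _ < (δ / c) * c := by exact mul_lt_mul_of_pos_right hm2 hcpos
          _ = δ := by field_simp
      exact max_lt hbound1 hbound2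
    · intro H
      rw [isOpen_iff_mem_nhds]
      intro A hA
      obtain ⟨ε, hε, hsub⟩ := H A hA
      have hopen : IsOpen {B | d B A < ε} := isOpen_lt (hdc A) continuous_const
      have hAmem : A ∈ {B | d B A < ε} := by
        show d A A < ε
        rw [hd, inv_mul_cancel, hlone]
        exact hε
      exact Filter.mem_of_superset (hopen.mem_nhds hAmem) hsub
  · -- properness
    intro r hr
    rw [(inducing_e' (n := n)).isCompact_iff]
    set c : ℝ := Real.exp r - 1 with hc
    have hc0 : 0 ≤ c := by
      have := Real.one_le_exp hr.le
      rw [hc]; linarith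
    have himg : (e' (n := n)) '' {A : GL (Fin n) ℝ | l A ≤ r}
        = {q : (EuclideanSpace ℝ (Fin n) →L[ℝ] EuclideanSpace ℝ (Fin n))
            × (EuclideanSpace ℝ (Fin n) →L[ℝ] EuclideanSpace ℝ (Fin n)) |
            q.1 * q.2 = 1 ∧ q.2 * q.1 = 1 ∧ ‖q.1 - 1‖ ≤ c ∧ ‖q.2 - 1‖ ≤ c} := by
      ext q
      constructor
      · rintro ⟨A, hA, rfl⟩
        simp only [Set.mem_setOf_eq] at hA ⊢
        have hAl := hl A ▸ hA
        have h1 := (max_le_iff.mp hAl).1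
        have h2 := (max_le_iff.mp hAl).2
        have hnn1 := matOpNorm_nonneg ((A : Matrix (Fin n) (Fin n) ℝ) - 1)
        have hnn2 := matOpNorm_nonneg (((A⁻¹ : GL (Fin n) ℝ) : Matrix (Fin n) (Fin n) ℝ) - 1)
        have hb1 := (Real.log_le_iff_le_exp (by linarith)).mp h1
        have hb2 := (Real.log_le_iff_le_exp (by linarith)).mp h2
        refine ⟨?_, ?_, ?_, ?_⟩
        · show T ((A : Matrix (Fin n) (Fin n) ℝ))
            * T (((A⁻¹ : GL (Fin n) ℝ) : Matrix (Fin n) (Fin n) ℝ)) = 1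
          rw [← map_mul, Units.mul_inv, map_one]
        · show T (((A⁻¹ : GL (Fin n) ℝ) : Matrix (Fin n) (Fin n) ℝ))
            * T ((A : Matrix (Fin n) (Fin n) ℝ)) = 1
          rw [← map_mul, Units.inv_mul, map_one]
        · show ‖T ((A : Matrix (Fin n) (Fin n) ℝ)) - 1‖ ≤ c
          rw [← map_one (Stmt11Aux.T (n := n)), ← map_sub, ← matOpNorm_def]
          rw [hc]; linarith
        · show ‖T (((A⁻¹ : GL (Fin n) ℝ) : Matrix (Fin n) (Fin n) ℝ)) - 1‖ ≤ c
          rw [← map_one (Stmt11Aux.T (n := n)), ← map_sub, ← matOpNorm_def]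
          rw [hc]; linarith
      · rintro ⟨h1, h2, h3, h4⟩
        have hx1 : (Stmt11Aux.T (n := n)).symm q.1 * (Stmt11Aux.T (n := n)).symm q.2 = 1 := by
          rw [← map_mul, h1, map_one]
        have hx2 : (Stmt11Aux.T (n := n)).symm q.2 * (Stmt11Aux.T (n := n)).symm q.1 = 1 := by
          rw [← map_mul, h2, map_one]
        refine ⟨⟨(Stmt11Aux.T (n := n)).symm q.1, (Stmt11Aux.T (n := n)).symm q.2, hx1, hx2⟩,
          ?_, ?_⟩
        · show l _ ≤ r
          rw [hl]
          have hval1 : ((⟨(Stmt11Aux.T (n := n)).symm q.1, (Stmt11Aux.T (n := n)).symm q.2,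
              hx1, hx2⟩ : GL (Fin n) ℝ) : Matrix (Fin n) (Fin n) ℝ)
              = (Stmt11Aux.T (n := n)).symm q.1 := rfl
          have hval2 : (((⟨(Stmt11Aux.T (n := n)).symm q.1, (Stmt11Aux.T (n := n)).symm q.2,
              hx1, hx2⟩ : GL (Fin n) ℝ)⁻¹ : GL (Fin n) ℝ) : Matrix (Fin n) (Fin n) ℝ)
              = (Stmt11Aux.T (n := n)).symm q.2 := rfl
          rw [hval1, hval2]
          have hn1 : matOpNorm ((Stmt11Aux.T (n := n)).symm q.1 - 1) = ‖q.1 - 1‖ := by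
            rw [matOpNorm_def, map_sub, map_one]
            congr 2
            exact StarAlgEquiv.apply_symm_apply _ _
          have hn2 : matOpNorm ((Stmt11Aux.T (n := n)).symm q.2 - 1) = ‖q.2 - 1‖ := by
            rw [matOpNorm_def, map_sub, map_one]
            congr 2
            exact StarAlgEquiv.apply_symm_apply _ _
          rw [hn1, hn2]
          have hq1 : (0:ℝ) ≤ ‖q.1 - 1‖ := norm_nonneg _
          have hq2 : (0:ℝ) ≤ ‖q.2 - 1‖ := norm_nonneg _
          apply max_le
          · exact (Real.log_le_iff_le_exp (by linarith)).mpr (by rw [hc] at h3; linarith)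
          · exact (Real.log_le_iff_le_exp (by linarith)).mpr (by rw [hc] at h4; linarith)
        · show (_, _) = q
          have e1 : T ((Stmt11Aux.T (n := n)).symm q.1) = q.1 :=
            StarAlgEquiv.apply_symm_apply _ _
          have e2 : T ((Stmt11Aux.T (n := n)).symm q.2) = q.2 :=
            StarAlgEquiv.apply_symm_apply _ _
          exact Prod.ext e1 e2
    rw [himg]
    apply IsCompact.of_isClosed_subset
      ((isCompact_closedBall (1 : EuclideanSpace ℝ (Fin n) →L[ℝ] EuclideanSpace ℝ (Fin n)) c).prod
        (isCompact_closedBall (1 : EuclideanSpace ℝ (Fin n) →L[ℝ] EuclideanSpace ℝ (Fin n)) c))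
    · exact ((isClosed_eq (continuous_fst.mul continuous_snd) continuous_const).inter
        ((isClosed_eq (continuous_snd.mul continuous_fst) continuous_const).inter
          ((isClosed_le ((continuous_fst.sub continuous_const).norm) continuous_const).inter
            (isClosed_le ((continuous_snd.sub continuous_const).norm) continuous_const))))
    · rintro q ⟨_, _, h3, h4⟩
      constructor
      · rw [Metric.mem_closedBall, dist_eq_norm]; exact h3
      · rw [Metric.mem_closedBall, dist_eq_norm]; exact h4
end

section
/- With the weighted word length l on a countable discrete group Γ as above, the spheres ∂(e,n) = {g : l(g) = n} satisfy |∂(e,n)| ≤ 2·3^{n−1} for every n ∈ ℕ, via the inclusion ∂(e,n) ⊆ ⋃_{k=1}^{n} Z_k · ∂(e, n−k). -/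
/-!
A word of minimal weight `n ≥ 1` for `g` starts with a letter `x_k^{±1}`, `1 ≤ k ≤ n`, and the
rest of it is a word of minimal weight `n - k` (a shorter word for the rest would give a shorter
word for `g`). Hence `∂(n) ⊆ ⋃ₖ Z_k · ∂(n - k)` and `|∂(n)| ≤ 2 ∑_{j < n} |∂(j)|`. As `∂(0) = {e}`,
the balls `B(n) = ⋃_{j ≤ n} ∂(j)` satisfy `|B(n)| ≤ 3 |B(n - 1)|`, so `|B(n)| ≤ 3ⁿ` and
`|∂(n)| ≤ 2 |B(n - 1)| ≤ 2 · 3ⁿ⁻¹`.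
-/

open Pointwise

theorem Set.encard_pair_mul_le {G : Type*} [Group G] (a b : G) (s : Set G) :
    (({a, b} : Set G) * s).encard ≤ 2 * s.encard := by
  rw [Set.insert_eq, Set.union_mul, Set.singleton_mul, Set.singleton_mul, two_mul]
  refine (Set.encard_union_le _ _).trans (add_le_add ?_ ?_) <;>
    exact ((mul_right_injective _).encard_image _).le

theorem Real.sInf_natCast_image (s : Set ℕ) : sInf (((↑) : ℕ → ℝ) '' s) = ((sInf s : ℕ) : ℝ) := by
  rcases s.eq_empty_or_nonempty with rfl | hs
  · simp [Real.sInf_empty]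
  · exact (Nat.mono_cast.map_isLeast (isLeast_csInf hs)).csInf_eq

namespace WeightedWord

variable {Γ : Type*} [Group Γ] (x : ℕ → Γ)

/-- `(k, true)` stands for `x k` and `(k, false)` for `(x k)⁻¹`; both have weight `k`. -/
def letter (p : ℕ × Bool) : Γ := if p.2 then x p.1 else (x p.1)⁻¹

def generators : Set Γ := {g | ∃ m : ℕ, 1 ≤ m ∧ (g = x m ∨ g = (x m)⁻¹)}

def eval (L : List (ℕ × Bool)) : Γ := (L.map (letter x)).prod

def weights (g : Γ) : Set ℕ :=
  {m | ∃ L : List (ℕ × Bool), (∀ p ∈ L, 1 ≤ p.1) ∧ eval x L = g ∧ (L.map Prod.fst).sum = m}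

/-- The weighted word length; it is `0` for elements that have no word at all. -/
noncomputable def length (g : Γ) : ℕ := sInf (weights x g)

def sphere (n : ℕ) : Set Γ := {g | length x g = n}

theorem letter_mem_pair (p : ℕ × Bool) : letter x p ∈ ({x p.1, (x p.1)⁻¹} : Set Γ) := by
  unfold letter; split <;> simp

theorem eval_cons (p : ℕ × Bool) (L : List (ℕ × Bool)) :
    eval x (p :: L) = letter x p * eval x L :=
  List.prod_cons

theorem zero_mem_weights_one : 0 ∈ weights x 1 :=
  ⟨[], by simp, rfl, rfl⟩

theorem mem_weights_of_mem_pair {k : ℕ} (hk : 1 ≤ k) {y : Γ}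
    (hy : y ∈ ({x k, (x k)⁻¹} : Set Γ)) : k ∈ weights x y := by
  rcases hy with rfl | rfl
  · exact ⟨[(k, true)], by simpa using hk, by simp [eval, letter], by simp⟩
  · exact ⟨[(k, false)], by simpa using hk, by simp [eval, letter], by simp⟩

theorem add_mem_weights_mul {g h : Γ} {a b : ℕ} (ha : a ∈ weights x g) (hb : b ∈ weights x h) :
    a + b ∈ weights x (g * h) := by
  obtain ⟨L, hL, rfl, rfl⟩ := ha
  obtain ⟨M, hM, rfl, rfl⟩ := hb
  exact ⟨L ++ M, fun p hp => (List.mem_append.1 hp).elim (hL p) (hM p), by simp [eval], by simp⟩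

theorem weights_nonempty (hgen : Subgroup.closure (generators x) = ⊤) (g : Γ) :
    (weights x g).Nonempty := by
  have hg : g ∈ Subgroup.closure (generators x) := hgen ▸ Subgroup.mem_top g
  induction hg using Subgroup.closure_induction'' with
  | mem y hy =>
    obtain ⟨m, hm, hy⟩ := hy
    exact ⟨m, mem_weights_of_mem_pair x hm hy⟩
  | inv_mem y hy =>
    obtain ⟨m, hm, hy⟩ := hy
    exact ⟨m, mem_weights_of_mem_pair x hm (by rcases hy with rfl | rfl <;> simp)⟩
  | one => exact ⟨0, zero_mem_weights_one x⟩
  | mul _ _ _ _ hy hz =>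
    obtain ⟨a, ha⟩ := hy
    obtain ⟨b, hb⟩ := hz
    exact ⟨a + b, add_mem_weights_mul x ha hb⟩

theorem length_le {g : Γ} {m : ℕ} (hm : m ∈ weights x g) : length x g ≤ m :=
  Nat.sInf_le hm

theorem length_mem_weights {g : Γ} (hg : (weights x g).Nonempty) : length x g ∈ weights x g :=
  Nat.sInf_mem hg

theorem length_eq_zero_iff (hgen : Subgroup.closure (generators x) = ⊤) (g : Γ) :
    length x g = 0 ↔ g = 1 := by
  refine ⟨fun hg => ?_, fun hg => hg ▸ Nat.sInf_eq_zero.2 (.inl (zero_mem_weights_one x))⟩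
  obtain ⟨L, hL, rfl, hsum⟩ := length_mem_weights x (weights_nonempty x hgen g)
  cases L with
  | nil => rfl
  | cons p t =>
    have := hL p List.mem_cons_self
    simp only [List.map_cons, List.sum_cons] at hsum
    omega

theorem sphere_zero (hgen : Subgroup.closure (generators x) = ⊤) : sphere x 0 = {1} :=
  Set.ext (length_eq_zero_iff x hgen)

theorem sphere_subset_biUnion {n : ℕ} (hn : n ≠ 0) :
    sphere x n ⊆ ⋃ k ∈ Finset.Icc 1 n, ({x k, (x k)⁻¹} : Set Γ) * sphere x (n - k) := by
  intro g hg
  have hne : (weights x g).Nonempty := by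
    by_contra h
    rw [Set.not_nonempty_iff_eq_empty] at h
    exact hn (hg.symm.trans (by rw [length, h, Nat.sInf_empty]))
  obtain ⟨L, hL, rfl, hsum⟩ := length_mem_weights x hne
  cases L with
  | nil => exact absurd (hsum.trans hg) (Ne.symm hn)
  | cons p t =>
    have hp : 1 ≤ p.1 := hL p List.mem_cons_self
    have hweight : p.1 + (t.map Prod.fst).sum = n := by simpa using hsum.trans hg
    have ht : (t.map Prod.fst).sum ∈ weights x (eval x t) :=
      ⟨t, fun q hq => hL q (List.mem_cons_of_mem p hq), rfl, rfl⟩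
    have hlen_le : length x (eval x (p :: t)) ≤ p.1 + length x (eval x t) := by
      rw [eval_cons]
      exact length_le x (add_mem_weights_mul x (mem_weights_of_mem_pair x hp (letter_mem_pair x p))
        (length_mem_weights x ⟨_, ht⟩))
    have hrest : length x (eval x t) = n - p.1 := by
      have := length_le x ht
      change length x _ = n at hg
      omega
    rw [Set.mem_iUnion₂]
    refine ⟨p.1, Finset.mem_Icc.2 ⟨hp, by omega⟩, ?_⟩
    rw [eval_cons]
    exact Set.mul_mem_mul (letter_mem_pair x p) hrest

theorem encard_sphere_succ_le (n : ℕ) :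
    (sphere x (n + 1)).encard ≤ 2 * ∑ j ∈ Finset.range (n + 1), (sphere x j).encard := by
  calc (sphere x (n + 1)).encard
      ≤ (⋃ k ∈ Finset.Icc 1 (n + 1), ({x k, (x k)⁻¹} : Set Γ) * sphere x (n + 1 - k)).encard :=
        Set.encard_le_encard (sphere_subset_biUnion x n.succ_ne_zero)
    _ ≤ ∑ k ∈ Finset.Icc 1 (n + 1), (({x k, (x k)⁻¹} : Set Γ) * sphere x (n + 1 - k)).encard :=
        Finset.set_encard_biUnion_le _ _
    _ ≤ ∑ k ∈ Finset.Icc 1 (n + 1), 2 * (sphere x (n + 1 - k)).encard :=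
        Finset.sum_le_sum fun k _ => Set.encard_pair_mul_le _ _ _
    _ = 2 * ∑ j ∈ Finset.range (n + 1), (sphere x j).encard := by
        rw [← Finset.mul_sum, ← Finset.Ico_add_one_right_eq_Icc,
          Finset.sum_Ico_reflect (fun j => (sphere x j).encard) 1 le_rfl, Finset.range_eq_Ico]
        simp

theorem sum_encard_sphere_le (hgen : Subgroup.closure (generators x) = ⊤) (n : ℕ) :
    ∑ j ∈ Finset.range (n + 1), (sphere x j).encard ≤ 3 ^ n := by
  induction n with
  | zero => simp [sphere_zero x hgen]
  | succ n ih =>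
    calc ∑ j ∈ Finset.range (n + 1 + 1), (sphere x j).encard
        ≤ ∑ j ∈ Finset.range (n + 1), (sphere x j).encard
            + 2 * ∑ j ∈ Finset.range (n + 1), (sphere x j).encard := by
          rw [Finset.sum_range_succ]
          exact add_le_add_right (encard_sphere_succ_le x n) _
      _ = 3 * ∑ j ∈ Finset.range (n + 1), (sphere x j).encard := by ring
      _ ≤ 3 ^ (n + 1) := by
          rw [pow_succ']
          gcongr

theorem encard_sphere_succ_le_two_mul_three_pow
    (hgen : Subgroup.closure (generators x) = ⊤) (n : ℕ) :
    (sphere x (n + 1)).encard ≤ 2 * 3 ^ n :=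
  (encard_sphere_succ_le x n).trans (by gcongr; exact sum_encard_sphere_le x hgen n)

theorem natCast_length [DecidableEq Γ] (g : Γ) :
    ((length x g : ℕ) : ℝ) = if g = 1 then 0 else
      sInf {r : ℝ | ∃ L : List (ℕ × Bool), (∀ p ∈ L, 1 ≤ p.1) ∧
        (L.map fun p => if p.2 then x p.1 else (x p.1)⁻¹).prod = g ∧
        r = (L.map fun p => (p.1 : ℝ)).sum} := by
  split_ifs with hg
  · simp [hg, length, Nat.sInf_eq_zero.2 (.inl (zero_mem_weights_one x))]
  · rw [length, ← Real.sInf_natCast_image]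
    congr 1
    ext r
    constructor
    · rintro ⟨_, ⟨L, hL, hprod, rfl⟩, rfl⟩
      exact ⟨L, hL, hprod, by simp [Nat.cast_list_sum, List.map_map, Function.comp_def]⟩
    · rintro ⟨L, hL, hprod, rfl⟩
      exact ⟨_, ⟨L, hL, hprod, rfl⟩, by simp [Nat.cast_list_sum, List.map_map, Function.comp_def]⟩

end WeightedWord

open WeightedWord in
theorem stmt16_general {Γ : Type*} [Group Γ] [DecidableEq Γ]
    (x : ℕ → Γ)
    (S : Set Γ) (hS : S = {g : Γ | ∃ m : ℕ, 1 ≤ m ∧ (g = x m ∨ g = (x m)⁻¹)})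
    (hSgen : Subgroup.closure S = ⊤)
    (l : Γ → ℝ)
    (hl : ∀ g : Γ, l g = if g = 1 then 0 else
      sInf {r : ℝ | ∃ L : List (ℕ × Bool), (∀ p ∈ L, 1 ≤ p.1) ∧
        (L.map fun p => if p.2 then x p.1 else (x p.1)⁻¹).prod = g ∧
        r = (L.map fun p => (p.1 : ℝ)).sum}) :
    ∀ n : ℕ, 1 ≤ n →
      ({g : Γ | l g = (n : ℝ)} ⊆
        ⋃ k ∈ Finset.Icc 1 n, ({x k, (x k)⁻¹} : Set Γ) * {g : Γ | l g = ((n - k : ℕ) : ℝ)}) ∧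
      ({g : Γ | l g = (n : ℝ)}).ncard ≤ 2 * 3 ^ (n - 1) := by
  subst hS
  have hsphere (m : ℕ) : {g : Γ | l g = (m : ℝ)} = sphere x m := by
    ext g
    rw [Set.mem_ofPred_eq, hl, ← natCast_length, Nat.cast_inj]
    rfl
  intro n hn
  obtain ⟨n, rfl⟩ := Nat.exists_eq_add_of_le' hn
  simp only [hsphere]
  refine ⟨sphere_subset_biUnion x n.succ_ne_zero, ?_⟩
  rw [Set.ncard_def]
  exact ENat.toNat_le_of_le_natCast
    (by simpa using encard_sphere_succ_le_two_mul_three_pow x hSgen n)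

/-- With the weighted word length `l` on a countable discrete group `Γ` generated
by an infinite symmetric set `S = ⋃ Z_k`, `Z_k = {x_k, x_k⁻¹}`, with weights
`l₀(x_k) = k`: the spheres `∂(e,n) = {g : l(g) = n}` satisfy
`∂(e,n) ⊆ ⋃_{k=1}^n Z_k · ∂(e, n−k)` and `|∂(e,n)| ≤ 2·3^{n−1}` for all `n ≥ 1`. -/
theorem stmt16 {Γ : Type*} [Group Γ] [Countable Γ] [DecidableEq Γ]
    (x : ℕ → Γ)
    (S : Set Γ) (hS : S = {g : Γ | ∃ m : ℕ, 1 ≤ m ∧ (g = x m ∨ g = (x m)⁻¹)})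
    (hSe : (1 : Γ) ∉ S)
    (hSinf : S.Infinite)
    (hSgen : Subgroup.closure S = ⊤)
    (l : Γ → ℝ)
    (hl : ∀ g : Γ, l g = if g = 1 then 0 else
      sInf {r : ℝ | ∃ L : List (ℕ × Bool), (∀ p ∈ L, 1 ≤ p.1) ∧
        (L.map fun p => if p.2 then x p.1 else (x p.1)⁻¹).prod = g ∧
        r = (L.map fun p => (p.1 : ℝ)).sum}) :
    ∀ n : ℕ, 1 ≤ n →
      ({g : Γ | l g = (n : ℝ)} ⊆
        ⋃ k ∈ Finset.Icc 1 n, ({x k, (x k)⁻¹} : Set Γ) * {g : Γ | l g = ((n - k : ℕ) : ℝ)}) ∧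
      ({g : Γ | l g = (n : ℝ)}).ncard ≤ 2 * 3 ^ (n - 1) :=
  stmt16_general x S hS hSgen l hl
end

section
/- Let G be a locally compact, second countable group with Haar measure μ and a proper left invariant metric d generating the topology such that μ(B_d(e,n)) ≤ β e^{αn} for all n. For each n define φⁿ(y) = max(0, 1 − d(e,y)/n) and bⁿ(g) = λ(g)φⁿ − φⁿ ∈ L^{2n}(G,μ). Then ‖bⁿ(g)‖_{2n}^{2n} ≤ (d(e,g)/n)^{2n} · 2β e^{αn}, and Σ_{n=1}^∞ ‖bⁿ(g)‖_{2n}² ≤ 4β e^{α} d(g,e)² (assuming β ≥ 1); hence b(g) = ⊕ₙ bⁿ(g) lies in the ℓ²-direct sum X = ⊕ₙ L^{2n}(G,μ) with ‖b(g)‖_X ≤ 2√β e^{α/2} d(g,e). -/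
/-!
The tent function `φⁿ` is `1/n`-Lipschitz for the left-invariant `d`, so `|bⁿ(g)| ≤ d(e,g)/n`
everywhere, and `bⁿ(g)` vanishes off `B(g,n) ∪ B(e,n)`, whose measure is at most `2βe^{αn}` by
left invariance. This is the `L^{2n}` bound. Since `2β ≥ 1`, its `n`-th root is at most
`2βe^α (d(e,g)/n)²`, and `∑ 1/n² = π²/6 ≤ 2` bounds the sum of squared norms.
-/

open MeasureTheory
open scoped ENNReal NNReal

lemma tsum_ofReal_one_div_add_one_sq_le_two :
    ∑' n : ℕ, ENNReal.ofReal (1 / ((n : ℝ) + 1) ^ 2) ≤ 2 := by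
  have hsum : HasSum (fun n : ℕ => 1 / ((n : ℝ) + 1) ^ 2) (Real.pi ^ 2 / 6) := by
    simpa using (hasSum_nat_add_iff' 1).mpr hasSum_zeta_two
  rw [← ENNReal.ofReal_tsum_of_nonneg (fun n => by positivity) hsum.summable, hsum.tsum_eq,
    ← ENNReal.ofReal_ofNat 2]
  refine ENNReal.ofReal_le_ofReal ?_
  nlinarith [Real.pi_lt_d2, Real.pi_pos]

section Lebesgue

variable {α : Type*} [MeasurableSpace α] {μ : Measure α}

lemma lintegral_ofReal_abs_pow_le {f : α → ℝ} {s : Set α} {c : ℝ} {k : ℕ} (hk : k ≠ 0)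
    (hf : ∀ x, |f x| ≤ c) (hs : Function.support f ⊆ s) :
    ∫⁻ x, ENNReal.ofReal |f x| ^ k ∂μ ≤ ENNReal.ofReal c ^ k * μ s := by
  refine (lintegral_mono fun x => ?_).trans (lintegral_indicator_const_le s _)
  by_cases hx : x ∈ s
  · rw [Set.indicator_of_mem hx]
    exact pow_le_pow_left' (ENNReal.ofReal_le_ofReal (hf x)) k
  · rw [Set.indicator_of_notMem hx, Function.notMem_support.mp fun h => hx (hs h)]
    simp [hk]

lemma eLpNorm_sq_le_of_lintegral_pow_le {f : α → ℝ} {m : ℕ} (hm : m ≠ 0) {C : ℝ≥0∞}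
    (h : ∫⁻ x, ENNReal.ofReal |f x| ^ (2 * m) ∂μ ≤ C ^ m) :
    eLpNorm f (2 * m : ℕ) μ ^ 2 ≤ C := by
  have hp : ((2 * m : ℕ) : ℝ≥0) ≠ 0 := by positivity
  have hpow := eLpNorm_nnreal_pow_eq_lintegral (f := f) (μ := μ) hp
  simp only [NNReal.coe_natCast, ENNReal.rpow_natCast, ENNReal.coe_natCast,
    Real.enorm_eq_ofReal_abs] at hpow
  rw [← ENNReal.pow_le_pow_left_iff hm, ← pow_mul, hpow]
  exact h

end Lebesgue

lemma nonneg_of_symm_of_triangle {X : Type*} {d : X → X → ℝ} (hsymm : ∀ x y, d x y = d y x)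
    (htri : ∀ x y z, d x z ≤ d x y + d y z) (x y : X) : 0 ≤ d x y := by
  -- `d x x ≤ 2 d x x` gives `0 ≤ d x x`, and `d x x ≤ d x y + d y x = 2 d x y`.
  nlinarith [htri x y x, htri x x x, hsymm x y]

section Tent

variable {G : Type*} [Group G] {d : G → G → ℝ}

variable (d) in
noncomputable def tent (n : ℕ) (y : G) : ℝ := max 0 (1 - d 1 y / n)

variable (d) in
noncomputable def tentCocycle (n : ℕ) (g h : G) : ℝ := tent d n (g⁻¹ * h) - tent d n h

lemma tent_inv_mul (hinv : ∀ g x y : G, d (g * x) (g * y) = d x y) (n : ℕ) (g h : G) :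
    tent d n (g⁻¹ * h) = max 0 (1 - d g h / n) := by
  rw [tent, ← hinv g, mul_one, mul_inv_cancel_left]

lemma abs_tentCocycle_le (hsymm : ∀ x y : G, d x y = d y x)
    (htri : ∀ x y z : G, d x z ≤ d x y + d y z) (hinv : ∀ g x y : G, d (g * x) (g * y) = d x y)
    {n : ℕ} (hn : 0 < n) (g h : G) : |tentCocycle d n g h| ≤ d 1 g / n := by
  have hn' : (0 : ℝ) < n := by exact_mod_cast hn
  rw [tentCocycle, tent_inv_mul hinv, tent, max_comm 0, max_comm 0]
  refine (abs_max_sub_max_le_abs _ _ _).trans ?_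
  rw [show 1 - d g h / n - (1 - d 1 h / n) = (d 1 h - d g h) / n by ring, abs_div,
    abs_of_pos hn']
  gcongr
  rw [abs_sub_le_iff]
  constructor <;> linarith [htri 1 g h, htri g 1 h, hsymm g 1]

lemma support_tentCocycle_subset (hinv : ∀ g x y : G, d (g * x) (g * y) = d x y) {n : ℕ}
    (hn : 0 < n) (g : G) :
    Function.support (tentCocycle d n g) ⊆ {h | d g h < n} ∪ {h | d 1 h < n} := by
  have hn' : (0 : ℝ) < n := by exact_mod_cast hn
  intro h hh
  contrapose! hh
  simp only [Set.mem_union, Set.mem_ofPred_eq, not_or, not_lt] at hh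
  rw [Function.notMem_support, tentCocycle, tent_inv_mul hinv, tent,
    max_eq_left (by linarith [(one_le_div hn').2 hh.1]),
    max_eq_left (by linarith [(one_le_div hn').2 hh.2]), sub_zero]

lemma measure_setOf_lt_eq [MeasurableSpace G] [MeasurableMul G] (μ : Measure G)
    [μ.IsMulLeftInvariant] (hsymm : ∀ x y : G, d x y = d y x)
    (hinv : ∀ g x y : G, d (g * x) (g * y) = d x y) (g : G) (r : ℝ) :
    μ {h | d g h < r} = μ {x | d x 1 < r} := by
  rw [← measure_preimage_mul μ g⁻¹ {x | d x 1 < r}]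
  congr 1
  ext h
  simp only [Set.mem_ofPred_eq, Set.mem_preimage]
  rw [← hinv g (g⁻¹ * h) 1, mul_inv_cancel_left, mul_one, hsymm]

end Tent

section Haar

variable {G : Type*} [Group G] [MeasurableSpace G] [MeasurableMul G] {μ : Measure G}
  [μ.IsMulLeftInvariant] {d : G → G → ℝ}

theorem lintegral_abs_tentCocycle_pow_le (hsymm : ∀ x y : G, d x y = d y x)
    (htri : ∀ x y z : G, d x z ≤ d x y + d y z) (hinv : ∀ g x y : G, d (g * x) (g * y) = d x y)
    {n : ℕ} (hn : 1 ≤ n) {V : ℝ} (hV : μ {x | d x 1 < n} ≤ ENNReal.ofReal V) (g : G) :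
    ∫⁻ h, ENNReal.ofReal |tentCocycle d n g h| ^ (2 * n) ∂μ ≤
      ENNReal.ofReal ((d 1 g / n) ^ (2 * n) * (2 * V)) := by
  have hc : 0 ≤ d 1 g / n := by
    have := nonneg_of_symm_of_triangle hsymm htri 1 g
    positivity
  calc ∫⁻ h, ENNReal.ofReal |tentCocycle d n g h| ^ (2 * n) ∂μ
      ≤ ENNReal.ofReal (d 1 g / n) ^ (2 * n) * μ ({h | d g h < n} ∪ {h | d 1 h < n}) :=
        lintegral_ofReal_abs_pow_le (by omega) (abs_tentCocycle_le hsymm htri hinv hn g)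
          (support_tentCocycle_subset hinv hn g)
    _ ≤ ENNReal.ofReal (d 1 g / n) ^ (2 * n) * (2 * ENNReal.ofReal V) := by
        gcongr
        refine (measure_union_le _ _).trans ?_
        rw [two_mul, measure_setOf_lt_eq μ hsymm hinv, measure_setOf_lt_eq μ hsymm hinv]
        exact add_le_add hV hV
    _ = ENNReal.ofReal ((d 1 g / n) ^ (2 * n) * (2 * V)) := by
        rw [ENNReal.ofReal_mul (by positivity), ENNReal.ofReal_pow hc,
          ENNReal.ofReal_mul zero_le_two, ENNReal.ofReal_ofNat]

theorem eLpNorm_tentCocycle_sq_le (hsymm : ∀ x y : G, d x y = d y x)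
    (htri : ∀ x y z : G, d x z ≤ d x y + d y z) (hinv : ∀ g x y : G, d (g * x) (g * y) = d x y)
    {α β : ℝ} (hβ : 1 ≤ 2 * β)
    (hgrowth : ∀ n : ℕ, μ {x | d x 1 < n} ≤ ENNReal.ofReal (β * Real.exp (α * n)))
    {n : ℕ} (hn : n ≠ 0) (g : G) :
    eLpNorm (tentCocycle d n g) (2 * n : ℕ) μ ^ 2 ≤
      ENNReal.ofReal ((d 1 g / n) ^ 2 * (2 * β * Real.exp α)) := by
  refine eLpNorm_sq_le_of_lintegral_pow_le hn <|
    (lintegral_abs_tentCocycle_pow_le hsymm htri hinv (by omega) (hgrowth n) g).trans ?_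
  rw [← ENNReal.ofReal_pow (by positivity)]
  refine ENNReal.ofReal_le_ofReal ?_
  rw [mul_pow, ← pow_mul, mul_pow, ← Real.exp_nat_mul, mul_comm (n : ℝ), ← mul_assoc 2 β]
  have := nonneg_of_symm_of_triangle hsymm htri 1 g
  gcongr
  exact le_self_pow₀ hβ hn

theorem tsum_eLpNorm_tentCocycle_sq_le (hsymm : ∀ x y : G, d x y = d y x)
    (htri : ∀ x y z : G, d x z ≤ d x y + d y z) (hinv : ∀ g x y : G, d (g * x) (g * y) = d x y)
    {α β : ℝ} (hβ : 1 ≤ 2 * β)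
    (hgrowth : ∀ n : ℕ, μ {x | d x 1 < n} ≤ ENNReal.ofReal (β * Real.exp (α * n))) (g : G) :
    ∑' n : ℕ, eLpNorm (tentCocycle d (n + 1) g) (2 * (n + 1) : ℕ) μ ^ 2 ≤
      ENNReal.ofReal (4 * β * Real.exp α * d 1 g ^ 2) := by
  have hterm (n : ℕ) : eLpNorm (tentCocycle d (n + 1) g) (2 * (n + 1) : ℕ) μ ^ 2 ≤
      ENNReal.ofReal (2 * β * Real.exp α * d 1 g ^ 2) *
        ENNReal.ofReal (1 / ((n : ℝ) + 1) ^ 2) := by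
    refine (eLpNorm_tentCocycle_sq_le hsymm htri hinv hβ hgrowth n.succ_ne_zero g).trans_eq ?_
    rw [← ENNReal.ofReal_mul (by positivity)]
    congr 1
    push_cast
    field_simp
  calc ∑' n : ℕ, eLpNorm (tentCocycle d (n + 1) g) (2 * (n + 1) : ℕ) μ ^ 2
      ≤ ∑' n : ℕ, ENNReal.ofReal (2 * β * Real.exp α * d 1 g ^ 2) *
          ENNReal.ofReal (1 / ((n : ℝ) + 1) ^ 2) := ENNReal.tsum_le_tsum hterm
    _ ≤ ENNReal.ofReal (2 * β * Real.exp α * d 1 g ^ 2) * 2 := by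
        rw [ENNReal.tsum_mul_left]
        gcongr
        exact tsum_ofReal_one_div_add_one_sq_le_two
    _ = ENNReal.ofReal (4 * β * Real.exp α * d 1 g ^ 2) := by
        rw [← ENNReal.ofReal_ofNat 2, ← ENNReal.ofReal_mul (by positivity)]
        ring_nf

end Haar

theorem stmt17_general {G : Type*} [Group G] [TopologicalSpace G] [IsTopologicalGroup G]
    [MeasurableSpace G] [BorelSpace G]
    (μ : Measure G) [μ.IsHaarMeasure]
    (d : G → G → ℝ)
    (hsymm : ∀ x y : G, d x y = d y x)
    (htri : ∀ x y z : G, d x z ≤ d x y + d y z)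
    (hinv : ∀ g x y : G, d (g * x) (g * y) = d x y)
    (α β : ℝ) (hβ : 1 ≤ β)
    (hgrowth : ∀ n : ℕ, μ {x : G | d x 1 < (n : ℝ)} ≤ ENNReal.ofReal (β * Real.exp (α * n)))
    (φ : ℕ → G → ℝ) (hφ : ∀ (n : ℕ) (y : G), φ n y = max 0 (1 - d 1 y / n))
    (b : ℕ → G → G → ℝ) (hb : ∀ (n : ℕ) (g h : G), b n g h = φ n (g⁻¹ * h) - φ n h) :
    -- ‖bⁿ(g)‖_{2n}^{2n} ≤ (d(e,g)/n)^{2n} · 2β e^{αn}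
    (∀ g : G, ∀ n : ℕ, 1 ≤ n →
      ∫⁻ h, (ENNReal.ofReal |b n g h|) ^ (2 * n) ∂μ ≤
        ENNReal.ofReal ((d 1 g / n) ^ (2 * n) * (2 * β * Real.exp (α * n)))) ∧
    -- Σₙ ‖bⁿ(g)‖_{2n}² ≤ 4β e^α d(g,e)²
    (∀ g : G, ∑' n : ℕ, (eLpNorm (b (n + 1) g) ((2 * (n + 1) : ℕ)) μ) ^ 2 ≤
      ENNReal.ofReal (4 * β * Real.exp α * d 1 g ^ 2)) ∧
    -- hence b(g) ∈ X = ⊕ₙ L^{2n}(G,μ) with ‖b(g)‖_X ≤ 2√β e^{α/2} d(g,e)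
    (∀ g : G, (∑' n : ℕ, (eLpNorm (b (n + 1) g) ((2 * (n + 1) : ℕ)) μ) ^ 2) ^ (1/2 : ℝ) ≤
      ENNReal.ofReal (2 * Real.sqrt β * Real.exp (α / 2) * d 1 g)) := by
  obtain rfl : φ = tent d := funext₂ hφ
  obtain rfl : b = tentCocycle d := funext₃ hb
  have hβ' : 1 ≤ 2 * β := by linarith
  have hsum := tsum_eLpNorm_tentCocycle_sq_le hsymm htri hinv hβ' hgrowth
  refine ⟨fun g n hn => ?_, hsum,
    fun g => (ENNReal.rpow_le_rpow (hsum g) (by norm_num)).trans_eq ?_⟩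
  · simpa only [mul_assoc] using
      lintegral_abs_tentCocycle_pow_le hsymm htri hinv hn (hgrowth n) g
  · have hd := nonneg_of_symm_of_triangle hsymm htri 1 g
    have hsq : 4 * β * Real.exp α * d 1 g ^ 2 =
        (2 * Real.sqrt β * Real.exp (α / 2) * d 1 g) ^ 2 := by
      rw [mul_pow, mul_pow, mul_pow, Real.sq_sqrt (by linarith), ← Real.exp_nat_mul]
      ring_nf
    rw [ENNReal.ofReal_rpow_of_nonneg (by positivity) (by norm_num), ← Real.sqrt_eq_rpow, hsq,
      Real.sqrt_sq (by positivity)]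

/-- For a lcsc group `G` with Haar measure `μ` and a plig metric `d` of
exponentially controlled growth `μ(B(e,n)) ≤ β e^{αn}` (with `β ≥ 1`), the
cocycle coordinates `bⁿ(g) = λ(g)φⁿ − φⁿ`, `φⁿ(y) = max(0, 1 − d(e,y)/n)`,
satisfy `‖bⁿ(g)‖_{2n}^{2n} ≤ (d(e,g)/n)^{2n}·2βe^{αn}`, and
`Σₙ ‖bⁿ(g)‖_{2n}² ≤ 4βe^{α}d(g,e)²`; hence `b(g) = ⊕ₙ bⁿ(g)` lies in the
`ℓ²`-direct sum `X = ⊕ₙ L^{2n}(G,μ)` with `‖b(g)‖_X ≤ 2√β e^{α/2} d(g,e)`. -/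
theorem stmt17 {G : Type*} [Group G] [TopologicalSpace G] [IsTopologicalGroup G]
    [LocallyCompactSpace G] [SecondCountableTopology G]
    [MeasurableSpace G] [BorelSpace G]
    (μ : Measure G) [μ.IsHaarMeasure]
    (d : G → G → ℝ)
    (h0 : ∀ x y : G, d x y = 0 ↔ x = y)
    (hsymm : ∀ x y : G, d x y = d y x)
    (htri : ∀ x y z : G, d x z ≤ d x y + d y z)
    (hinv : ∀ g x y : G, d (g * x) (g * y) = d x y)
    (hproper : ∀ r : ℝ, IsCompact {x : G | d x 1 ≤ r})
    (hgen : ∀ s : Set G, IsOpen s ↔ ∀ x ∈ s, ∃ ε > 0, {y : G | d y x < ε} ⊆ s)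
    (α β : ℝ) (hα : 0 < α) (hβ : 1 ≤ β)
    (hgrowth : ∀ n : ℕ, μ {x : G | d x 1 < (n : ℝ)} ≤ ENNReal.ofReal (β * Real.exp (α * n)))
    (φ : ℕ → G → ℝ) (hφ : ∀ (n : ℕ) (y : G), φ n y = max 0 (1 - d 1 y / n))
    (b : ℕ → G → G → ℝ) (hb : ∀ (n : ℕ) (g h : G), b n g h = φ n (g⁻¹ * h) - φ n h) :
    -- ‖bⁿ(g)‖_{2n}^{2n} ≤ (d(e,g)/n)^{2n} · 2β e^{αn}
    (∀ g : G, ∀ n : ℕ, 1 ≤ n →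
      ∫⁻ h, (ENNReal.ofReal |b n g h|) ^ (2 * n) ∂μ ≤
        ENNReal.ofReal ((d 1 g / n) ^ (2 * n) * (2 * β * Real.exp (α * n)))) ∧
    -- Σₙ ‖bⁿ(g)‖_{2n}² ≤ 4β e^α d(g,e)²
    (∀ g : G, ∑' n : ℕ, (eLpNorm (b (n + 1) g) ((2 * (n + 1) : ℕ)) μ) ^ 2 ≤
      ENNReal.ofReal (4 * β * Real.exp α * d 1 g ^ 2)) ∧
    -- hence b(g) ∈ X = ⊕ₙ L^{2n}(G,μ) with ‖b(g)‖_X ≤ 2√β e^{α/2} d(g,e)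
    (∀ g : G, (∑' n : ℕ, (eLpNorm (b (n + 1) g) ((2 * (n + 1) : ℕ)) μ) ^ 2) ^ (1/2 : ℝ) ≤
      ENNReal.ofReal (2 * Real.sqrt β * Real.exp (α / 2) * d 1 g)) :=
  stmt17_general μ d hsymm htri hinv α β hβ hgrowth φ hφ b hb
end
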